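/- arXiv:1812.09979 — 2 statements merged into one kernel-verified Lean document; each statement's English description precedes it below -/
import Mathlib

section
/- Let R be a commutative Noetherian local ring of dimension 1 with nilradical I such that R/I is a discrete valuation ring and every zerodivisor of R lies in I. Suppose the associated graded modules M_n/M_{n-1} of the filtration M_n = (0 : I^n) are free over R/I of rank r_n, with r = Σ_n r_n. Then for every f ∈ R whose image in R/I is nonzero, length_R(R/(f)) = r · length_{R/I}((R/I)/(f̄)), where f̄ is the image of f. -/
/-!
Since every zerodivisor is nilpotent and `f` is not, `f` is a nonzerodivisor, so it acts
injectively on each `R ⧸ Mₙ` (an annihilator ideal) and hence on each graded piece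
`Mₙ₊₁ ⧸ Mₙ`. By the snake lemma, reduction modulo `f` then keeps the sequences
`0 → Mₙ → Mₙ₊₁ → Mₙ₊₁ ⧸ Mₙ → 0` exact, so `length (R ⧸ f)` is the sum of the lengths of the
reductions of the graded pieces; the `n`-th one is `rₙ` copies of `(R ⧸ I) ⧸ (f̄)`.
-/

open Module
open scoped Pointwise

lemma IsSMulRegular.mem_colon_bot_of_smul_mem {R A : Type*} [CommRing R] [AddCommGroup A]
    [Module R A] {r b : R} (hr : IsSMulRegular A r) {S : Set A}
    (h : r • b ∈ (⊥ : Submodule R A).colon S) : b ∈ (⊥ : Submodule R A).colon S := by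
  rw [Submodule.mem_colon] at h ⊢
  intro s hs
  have hrbs := h s hs
  rw [Submodule.mem_bot] at hrbs ⊢
  rw [smul_assoc] at hrbs
  exact hr.right_eq_zero_of_smul hrbs

section QuotSMulTop

variable {R : Type*} [CommRing R] (r : R)
  {A B C : Type*} [AddCommGroup A] [Module R A] [AddCommGroup B] [Module R B]
  [AddCommGroup C] [Module R C]

lemma QuotSMulTop.map_injective {i : A →ₗ[R] B} {g : B →ₗ[R] C} (hi : Function.Injective i)
    (H : Function.Exact i g) (hr : IsSMulRegular C r) :
    Function.Injective (QuotSMulTop.map r i) := by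
  have H₀ : Function.Exact (0 : PUnit →ₗ[R] A) i := (LinearMap.exact_zero_iff_injective _ i).mpr hi
  have := QuotSMulTop.map_first_exact_on_four_term_exact_of_isSMulRegular_last H₀ H hr
  rwa [map_zero, LinearMap.exact_zero_iff_injective] at this

lemma Module.length_quotSMulTop_eq_add_of_exact {i : A →ₗ[R] B} {g : B →ₗ[R] C}
    (hi : Function.Injective i) (hg : Function.Surjective g) (H : Function.Exact i g)
    (hr : IsSMulRegular C r) :
    length R (QuotSMulTop r B) = length R (QuotSMulTop r A) + length R (QuotSMulTop r C) :=
  length_eq_add_of_exact _ _ (QuotSMulTop.map_injective r hi H hr)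
    (QuotSMulTop.map_surjective r hg) (QuotSMulTop.map_exact r H hg)

lemma Module.length_quotSMulTop_pi (ι : Type*) [Fintype ι] :
    length R (QuotSMulTop r (ι → A)) = Fintype.card ι * length R (QuotSMulTop r A) := by
  classical
  rw [(QuotSMulTop.equivQuotTensor r _).length_eq, (TensorProduct.piRight R R _ _).length_eq,
    length_pi_of_fintype, (QuotSMulTop.equivQuotTensor r A).length_eq]
  simp

lemma Module.length_quotSMulTop_self :
    length R (QuotSMulTop r R) = length R (R ⧸ Ideal.span {r}) :=
  ((QuotSMulTop.equivQuotTensor r R).trans (TensorProduct.rid R _)).length_eq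

lemma Module.length_quotSMulTop_quotient (I : Ideal R) :
    length R (QuotSMulTop r (R ⧸ I)) =
      length (R ⧸ I) ((R ⧸ I) ⧸ Ideal.span {Ideal.Quotient.mk I r}) := by
  have h : r • (⊤ : Submodule R (R ⧸ I)) =
      (Ideal.span {Ideal.Quotient.mk I r}).restrictScalars R := by
    ext x
    simp [Submodule.mem_smul_pointwise_iff_exists, Ideal.mem_span_singleton', Algebra.smul_def,
      mul_comm]
  rw [((Submodule.quotEquivOfEq _ _ h).trans
      (Submodule.Quotient.restrictScalarsEquiv R _)).length_eq,
    length_eq_of_surjective (Ideal.Quotient.mk_surjective (I := I))]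

end QuotSMulTop

lemma Module.length_quotSMulTop_eq_sum_of_monotone {R X : Type*} [CommRing R] [AddCommGroup X]
    [Module R X] (r : R) {M : ℕ → Submodule R X} (hM : Monotone M) (h₀ : M 0 = ⊥)
    (hr : ∀ n, IsSMulRegular (M (n + 1) ⧸ (M n).comap (M (n + 1)).subtype) r) (N : ℕ) :
    length R (QuotSMulTop r (M N)) = ∑ n ∈ Finset.range N,
      length R (QuotSMulTop r (M (n + 1) ⧸ (M n).comap (M (n + 1)).subtype)) := by
  induction N with
  | zero =>
    have : Subsingleton (M 0) := by rw [h₀]; infer_instance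
    simp
  | succ N ih =>
    rw [Finset.sum_range_succ, ← ih, ← (QuotSMulTop.congr r (Submodule.comapSubtypeEquivOfLe
      (hM N.le_succ))).length_eq]
    exact length_quotSMulTop_eq_add_of_exact r (Submodule.injective_subtype _)
      (Submodule.mkQ_surjective _) (LinearMap.exact_subtype_mkQ _) (hr N)

theorem stmt_17_general {R : Type*} [CommRing R]
    (hzd : ∀ a : R, a ∉ nonZeroDivisors R → a ∈ nilradical R)
    (N : ℕ) (M : ℕ → Ideal R)
    (hM : ∀ n : ℕ, M n = Submodule.colon ⊥ (((nilradical R) ^ n : Ideal R) : Set R))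
    (hN : M N = ⊤) (r : ℕ → ℕ)
    (hfree : ∀ n < N,
      Nonempty ((↥(M (n + 1)) ⧸ Submodule.comap (M (n + 1)).subtype (M n)) ≃ₗ[R]
        (Fin (r (n + 1)) → R ⧸ nilradical R)))
    (rt : ℕ) (hrt : rt = ∑ n ∈ Finset.range N, r (n + 1))
    (f : R) (hf : Ideal.Quotient.mk (nilradical R) f ≠ 0) (l : ℕ)
    (hl : Order.krullDim (Submodule (R ⧸ nilradical R)
        ((R ⧸ nilradical R) ⧸ Ideal.span {Ideal.Quotient.mk (nilradical R) f}))
      = (l : WithBot ℕ∞)) :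
    Order.krullDim (Submodule R (R ⧸ Ideal.span {f}))
      = ((rt * l : ℕ) : WithBot ℕ∞) := by
  have hfreg : IsSMulRegular R f := Flat.isSMulRegular_of_nonZeroDivisors <| by
    by_contra h
    exact hf (Ideal.Quotient.eq_zero_iff_mem.mpr (hzd f h))
  have hsat (n : ℕ) (b : R) (hb : f • b ∈ M n) : b ∈ M n := by
    rw [hM] at hb ⊢
    exact hfreg.mem_colon_bot_of_smul_mem hb
  have hmono : Monotone M := monotone_nat_of_le_succ fun n => by
    rw [hM, hM]
    exact Submodule.colon_mono le_rfl (Ideal.pow_le_pow_right n.le_succ)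
  have h₀ : M 0 = ⊥ := by
    rw [hM, pow_zero, Ideal.one_eq_top, Submodule.top_coe, Submodule.colon_univ]
  have hl' : length (R ⧸ nilradical R)
      ((R ⧸ nilradical R) ⧸ Ideal.span {Ideal.Quotient.mk (nilradical R) f}) = l := by
    rw [← WithBot.coe_inj, coe_length, hl]
    rfl
  have hpiece (n : ℕ) (hn : n < N) :
      length R (QuotSMulTop f (M (n + 1) ⧸ Submodule.comap (M (n + 1)).subtype (M n))) =
        r (n + 1) * l := by
    rw [(QuotSMulTop.congr f (hfree n hn).some).length_eq, length_quotSMulTop_pi,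
      length_quotSMulTop_quotient, hl', Fintype.card_fin]
  rw [← coe_length, ← length_quotSMulTop_self, ← (QuotSMulTop.congr f
      ((LinearEquiv.ofEq _ _ hN).trans Submodule.topEquiv)).length_eq,
    length_quotSMulTop_eq_sum_of_monotone f hmono h₀
      (fun n => (isSMulRegular_quotient_iff_mem_of_smul_mem _ _).mpr fun x => hsat n x),
    Finset.sum_congr rfl fun n hn => hpiece n (Finset.mem_range.mp hn), hrt]
  push_cast
  rw [Finset.sum_mul]

/-- Let `R` be a Noetherian local ring of dimension 1 with nilradical `I`, such that
`R/I` is a DVR and every zerodivisor of `R` is nilpotent.  If the graded pieces of the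
filtration `Mₙ = (0 : Iⁿ)` are free over `R/I` of ranks `rₙ` with total rank `rt`,
then for every `f ∈ R` that is nonzero mod `I`,
`length_R (R/(f)) = rt * length_{R/I} ((R/I)/(f̄))`
(lengths expressed as Krull dimensions of the submodule lattices). -/
theorem stmt_17 {R : Type*} [CommRing R] [IsNoetherianRing R] [IsLocalRing R]
    (hdim : ringKrullDim R = 1)
    [IsDomain (R ⧸ nilradical R)] [IsDiscreteValuationRing (R ⧸ nilradical R)]
    (hzd : ∀ a : R, a ∉ nonZeroDivisors R → a ∈ nilradical R)
    (N : ℕ) (M : ℕ → Ideal R)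
    (hM : ∀ n : ℕ, M n = Submodule.colon ⊥ (((nilradical R) ^ n : Ideal R) : Set R))
    (hN : M N = ⊤) (r : ℕ → ℕ)
    (hfree : ∀ n < N,
      Nonempty ((↥(M (n + 1)) ⧸ Submodule.comap (M (n + 1)).subtype (M n)) ≃ₗ[R]
        (Fin (r (n + 1)) → R ⧸ nilradical R)))
    (rt : ℕ) (hrt : rt = ∑ n ∈ Finset.range N, r (n + 1))
    (f : R) (hf : Ideal.Quotient.mk (nilradical R) f ≠ 0) (l : ℕ)
    (hl : Order.krullDim (Submodule (R ⧸ nilradical R)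
        ((R ⧸ nilradical R) ⧸ Ideal.span {Ideal.Quotient.mk (nilradical R) f}))
      = (l : WithBot ℕ∞)) :
    Order.krullDim (Submodule R (R ⧸ Ideal.span {f}))
      = ((rt * l : ℕ) : WithBot ℕ∞) :=
  stmt_17_general hzd N M hM hN r hfree rt hrt f hf l hl
end

section
/- Let R be a commutative ring, I an ideal with I ⊆ nilrad(R), and let f ∈ R act injectively (be a non-zerodivisor) on each quotient M_n/M_{n-1} of a finite filtration 0 = M_0 ⊆ M_1 ⊆ ... ⊆ M_N = R by ideals. Then the induced filtration on R/(f) has successive quotients isomorphic to (M_n/M_{n-1}) / f·(M_n/M_{n-1}); i.e., (M_n + (f)) ∩ M_{n+1} = M_n + f·M_{n+1} for each n. -/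
/-! Multiplication by `f` is injective on every graded piece `Mₖ₊₁/Mₖ`, so by descending
induction from `M N = R` each `Mₖ` is saturated with respect to `f`: `f * r ∈ Mₖ → r ∈ Mₖ`.
For an ideal `B` saturated in this sense and `A ≤ B`, an element `a + r f` of `A + (f)` lying
in `B` has `r f ∈ B`, hence `r ∈ B`, which gives `(A + (f)) ∩ B = A + f B`. -/

namespace Ideal

theorem mem_of_mul_mem_of_graded_injective {R : Type*} [Semiring R] {N : ℕ} {M : ℕ → Ideal R}
    (hmono : Monotone M) (hN : M N = ⊤) {f : R}
    (hinj : ∀ n < N, ∀ x ∈ M (n + 1), f * x ∈ M n → x ∈ M n)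
    {k : ℕ} (hk : k ≤ N) {r : R} (hr : f * r ∈ M k) : r ∈ M k := by
  induction hk using Nat.decreasingInduction with
  | self => simp [hN]
  | of_succ k hk ih => exact hinj k hk r (ih (hmono k.le_succ hr)) hr

theorem sup_span_singleton_inf_eq_sup_span_singleton_mul {R : Type*} [CommRing R]
    {A B : Ideal R} (hAB : A ≤ B) {f : R} (hsat : ∀ r, f * r ∈ B → r ∈ B) :
    (A ⊔ span {f}) ⊓ B = A ⊔ span {f} * B := by
  refine le_antisymm ?_ <| sup_le (le_inf le_sup_left hAB) <|
    le_inf (le_sup_of_le_right mul_le_left) mul_le_right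
  rintro _ ⟨hx, hxB⟩
  obtain ⟨a, ha, _, hy, rfl⟩ := Submodule.mem_sup.mp hx
  obtain ⟨r, rfl⟩ := mem_span_singleton'.mp hy
  have hfr : f * r ∈ B := by
    simpa [mul_comm] using B.sub_mem hxB (hAB ha)
  rw [mul_comm r f]
  exact Submodule.add_mem_sup ha (mul_mem_mul (mem_span_singleton_self f) (hsat r hfr))

end Ideal

theorem stmt_18_general {R : Type*} [CommRing R]
    (N : ℕ) (M : ℕ → Ideal R) (hmono : Monotone M)
    (hN : M N = ⊤) (f : R)
    (hinj : ∀ n < N, ∀ x ∈ M (n + 1), f * x ∈ M n → x ∈ M n) :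
    ∀ n < N, (M n ⊔ Ideal.span {f}) ⊓ M (n + 1)
      = M n ⊔ Ideal.span {f} * M (n + 1) := fun n hn =>
  Ideal.sup_span_singleton_inf_eq_sup_span_singleton_mul (hmono n.le_succ)
    fun _ => Ideal.mem_of_mul_mem_of_graded_injective hmono hN hinj hn

/-- Let `R` be a commutative ring, `I ⊆ nilrad(R)` an ideal, and
`⊥ = M 0 ⊆ M 1 ⊆ ... ⊆ M N = R` a finite filtration by ideals on whose graded pieces
`f` acts injectively.  Then the graded pieces of the induced filtration on `R/(f)` are
`(Mₙ₊₁/Mₙ)/f·(Mₙ₊₁/Mₙ)`; i.e. `(Mₙ + (f)) ∩ Mₙ₊₁ = Mₙ + f·Mₙ₊₁` for each `n < N`. -/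
theorem stmt_18 {R : Type*} [CommRing R] (I : Ideal R) (hI : I ≤ nilradical R)
    (N : ℕ) (M : ℕ → Ideal R) (hmono : Monotone M)
    (h0 : M 0 = ⊥) (hN : M N = ⊤) (f : R)
    (hinj : ∀ n < N, ∀ x ∈ M (n + 1), f * x ∈ M n → x ∈ M n) :
    ∀ n < N, (M n ⊔ Ideal.span {f}) ⊓ M (n + 1)
      = M n ⊔ Ideal.span {f} * M (n + 1) :=
  stmt_18_general N M hmono hN f hinj
end
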